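/- arXiv:1103.2427 — 6 statements merged into one kernel-verified Lean document; each statement's English description precedes it below -/
import Mathlib

section
/- If the generalized Petersen graph P(n,k) has an efficient dominating set, then its domination number γ(P(n,k)) equals n/2 and n ≡ 0 (mod 4). -/
open SimpleGraph

/-- The generalized Petersen graph P(n,k): outer vertices `Sum.inl i`,
inner vertices `Sum.inr i`, indices in `ZMod n`. -/
def petersen (n k : ℕ) : SimpleGraph (ZMod n ⊕ ZMod n) :=
  SimpleGraph.fromRel (fun a b =>
    match a, b with
    | Sum.inl i, Sum.inl j => j = i + 1
    | Sum.inl i, Sum.inr j => j = i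
    | Sum.inr i, Sum.inr j => j = i + (k : ZMod n)
    | _, _ => False)

/-- S is a dominating set: N[S] = V. -/
def IsDominating {V : Type*} (G : SimpleGraph V) (S : Set V) : Prop :=
  ∀ v, v ∈ S ∨ ∃ u ∈ S, G.Adj u v

/-- The domination number: minimum cardinality of a (finite) dominating set. -/
noncomputable def gamma {V : Type*} (G : SimpleGraph V) : ℕ :=
  sInf {m | ∃ S : Finset V, IsDominating G ↑S ∧ S.card = m}

/-!
Every closed neighbourhood of the cubic graph `P(n,k)` has at most four vertices, so any
dominating set has at least `2n / 4 = n / 2` elements. For an efficient dominating set `D`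
the closed neighbourhoods of its members partition the vertices. Counting outer vertices, an
outer member of `D` dominates three of them and an inner member one; counting inner vertices,
the roles are swapped. With `a` outer and `b` inner members this gives `n = 3a + b = a + 3b`,
hence `a = b`, `n = 4a` and `|D| = 2a = n / 2`, which meets the lower bound.
-/

open Finset

variable {V : Type*}

def IsEfficientDominating (G : SimpleGraph V) (D : Set V) : Prop :=
  ∀ v, ∃! d, d ∈ D ∧ (d = v ∨ G.Adj d v)

lemma IsDominating.card_le_mul_card {G : SimpleGraph V} [Fintype V] [DecidableEq V]
    [DecidableRel G.Adj] {S : Finset V} (hS : IsDominating G S) :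
    Fintype.card V ≤ (G.maxDegree + 1) * #S := by
  have hcover : univ ⊆ S.biUnion fun s => insert s (G.neighborFinset s) := by
    intro v _
    rcases hS v with hv | ⟨s, hs, hsv⟩
    · exact mem_biUnion.2 ⟨v, hv, mem_insert_self v _⟩
    · exact mem_biUnion.2 ⟨s, hs, mem_insert_of_mem ((mem_neighborFinset G s v).2 hsv)⟩
  calc Fintype.card V = #(univ : Finset V) := card_univ.symm
    _ ≤ ∑ s ∈ S, #(insert s (G.neighborFinset s)) :=
      (card_le_card hcover).trans card_biUnion_le
    _ ≤ ∑ _s ∈ S, (G.maxDegree + 1) := sum_le_sum fun s _ =>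
      (card_insert_le _ _).trans (Nat.succ_le_succ (G.degree_le_maxDegree s))
    _ = (G.maxDegree + 1) * #S := by rw [sum_const, smul_eq_mul, mul_comm]

lemma gamma_eq_card_of_forall_card_le {G : SimpleGraph V} {D : Finset V}
    (hD : IsDominating G D) (hmin : ∀ S : Finset V, IsDominating G S → #D ≤ #S) :
    gamma G = #D :=
  le_antisymm (Nat.sInf_le ⟨D, hD, rfl⟩)
    (le_csInf ⟨_, D, hD, rfl⟩ fun _ ⟨S, hS, hcard⟩ => hcard ▸ hmin S hS)

namespace IsEfficientDominating

variable {G : SimpleGraph V}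

lemma isDominating {D : Set V} (hD : IsEfficientDominating G D) : IsDominating G D := by
  intro v
  obtain ⟨d, hd, rfl | hdv⟩ := (hD v).exists
  · exact Or.inl hd
  · exact Or.inr ⟨d, hd, hdv⟩

lemma card_eq_sum_card_filter [DecidableEq V] [DecidableRel G.Adj] {ι : Type*} [Fintype ι]
    {D : Finset V} (hD : IsEfficientDominating G D) (f : ι → V) :
    Fintype.card ι = ∑ d ∈ D, #{i | d = f i ∨ G.Adj d (f i)} := by
  choose g hg using fun i => (hD (f i)).exists
  rw [← card_univ, card_eq_sum_card_fiberwise fun i _ => (hg i).1]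
  refine sum_congr rfl fun d hd => congrArg card (filter_congr fun i _ => ?_)
  exact ⟨fun h => h ▸ (hg i).2, fun h => (hD (f i)).unique (hg i) ⟨hd, h⟩⟩

end IsEfficientDominating

lemma card_filter_eq_or_circulantGraph_singleton_adj {A : Type*} [AddGroup A] [Fintype A]
    [DecidableEq A] {a : A} (ha : a + a ≠ 0) (i : A) :
    #{j | i = j ∨ (circulantGraph {a}).Adj i j} = 3 := by
  have hfilter : ({j | i = j ∨ (circulantGraph {a}).Adj i j} : Finset A) =
      {-a + i, i, a + i} := by
    ext j
    simp only [mem_filter, mem_univ, true_and, circulantGraph_adj, Set.mem_singleton_iff,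
      mem_insert, mem_singleton, sub_eq_iff_eq_add, eq_neg_add_iff_add_eq]
    grind
  have ha₀ : a ≠ 0 := by rintro rfl; simp at ha
  rw [hfilter, card_eq_three]
  refine ⟨_, _, _, ?_, ?_, ?_, rfl⟩
  · simpa using ha₀
  · exact fun h => ha (neg_eq_iff_add_eq_zero.1 (add_right_cancel h))
  · simpa [eq_comm] using ha₀

lemma ZMod.natCast_ne_zero_of_pos_of_lt {m n : ℕ} (h0 : 0 < m) (h : m < n) :
    (m : ZMod n) ≠ 0 := by
  rw [Ne, ZMod.natCast_eq_zero_iff]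
  exact Nat.not_dvd_of_pos_of_lt h0 h

section Petersen

variable {n k : ℕ} {i j : ZMod n}

@[simp] lemma petersen_adj_inl_inl :
    (petersen n k).Adj (.inl i) (.inl j) ↔ (circulantGraph {1}).Adj i j := by
  simp [petersen, sub_eq_iff_eq_add', or_comm]

@[simp] lemma petersen_adj_inr_inr :
    (petersen n k).Adj (.inr i) (.inr j) ↔ (circulantGraph {(k : ZMod n)}).Adj i j := by
  simp [petersen, sub_eq_iff_eq_add', or_comm]

@[simp] lemma petersen_adj_inl_inr : (petersen n k).Adj (.inl i) (.inr j) ↔ i = j := by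
  simp [petersen, eq_comm]

@[simp] lemma petersen_adj_inr_inl : (petersen n k).Adj (.inr i) (.inl j) ↔ i = j := by
  simp [petersen]

instance : DecidableRel (petersen n k).Adj
  | .inl _, .inl _ => decidable_of_iff' _ petersen_adj_inl_inl
  | .inl _, .inr _ => decidable_of_iff' _ petersen_adj_inl_inr
  | .inr _, .inl _ => decidable_of_iff' _ petersen_adj_inr_inl
  | .inr _, .inr _ => decidable_of_iff' _ petersen_adj_inr_inr

lemma petersen_degree_le_three [NeZero n] (v : ZMod n ⊕ ZMod n) :
    (petersen n k).degree v ≤ 3 := by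
  rw [← card_neighborFinset_eq_degree]
  rcases v with i | i
  · refine (card_le_card fun w hw => ?_).trans
      (card_le_three (a := .inl (i - 1)) (b := .inl (i + 1)) (c := .inr i))
    rw [mem_neighborFinset] at hw
    rcases w with j | j <;> simp at hw ⊢ <;> grind
  · refine (card_le_card fun w hw => ?_).trans
      (card_le_three (a := .inl i) (b := .inr (i - k)) (c := .inr (i + k)))
    rw [mem_neighborFinset] at hw
    rcases w with j | j <;> simp at hw ⊢ <;> grind

namespace IsEfficientDominating

variable [NeZero n] {D : Finset (ZMod n ⊕ ZMod n)}

lemma petersen_card_outer (h2 : (2 : ZMod n) ≠ 0)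
    (hD : IsEfficientDominating (petersen n k) D) : n = 3 * #D.toLeft + #D.toRight := by
  have hrim := card_filter_eq_or_circulantGraph_singleton_adj (a := (1 : ZMod n))
    (by rwa [one_add_one_eq_two])
  calc n = Fintype.card (ZMod n) := (ZMod.card n).symm
    _ = ∑ d ∈ D, #{i | d = .inl i ∨ (petersen n k).Adj d (.inl i)} :=
      hD.card_eq_sum_card_filter _
    _ = ∑ _i ∈ D.toLeft, 3 + ∑ _i ∈ D.toRight, 1 := by
      simp only [sum_sum_eq_sum_toLeft_add_sum_toRight, Sum.inl.injEq, reduceCtorEq, false_or,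
        petersen_adj_inl_inl, petersen_adj_inr_inl, hrim, filter_eq, mem_univ, if_true,
        card_singleton]
    _ = 3 * #D.toLeft + #D.toRight := by simp [mul_comm]

lemma petersen_card_inner (hk : (k : ZMod n) + k ≠ 0)
    (hD : IsEfficientDominating (petersen n k) D) : n = #D.toLeft + 3 * #D.toRight := by
  have hrim := card_filter_eq_or_circulantGraph_singleton_adj hk
  calc n = Fintype.card (ZMod n) := (ZMod.card n).symm
    _ = ∑ d ∈ D, #{i | d = .inr i ∨ (petersen n k).Adj d (.inr i)} :=
      hD.card_eq_sum_card_filter _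
    _ = ∑ _i ∈ D.toLeft, 1 + ∑ _i ∈ D.toRight, 3 := by
      simp only [sum_sum_eq_sum_toLeft_add_sum_toRight, Sum.inr.injEq, reduceCtorEq, false_or,
        petersen_adj_inr_inr, petersen_adj_inl_inr, hrim, filter_eq, mem_univ, if_true,
        card_singleton]
    _ = #D.toLeft + 3 * #D.toRight := by simp [mul_comm]

end IsEfficientDominating

end Petersen

theorem efficient_dominating_petersen_general (n k : ℕ) (hk1 : 1 ≤ k) (hk2 : 2 * k < n)
    (D : Set (ZMod n ⊕ ZMod n))
    (hD : ∀ v : ZMod n ⊕ ZMod n, ∃! d, d ∈ D ∧ (d = v ∨ (petersen n k).Adj d v)) :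
    gamma (petersen n k) = n / 2 ∧ n % 4 = 0 := by
  have : NeZero n := ⟨by omega⟩
  obtain ⟨D, rfl⟩ := D.toFinite.exists_finset_coe
  have hD : IsEfficientDominating (petersen n k) D := hD
  have hout := hD.petersen_card_outer <| by
    exact_mod_cast ZMod.natCast_ne_zero_of_pos_of_lt (m := 2) two_pos (by omega)
  have hin := hD.petersen_card_inner <| by
    exact_mod_cast ZMod.natCast_ne_zero_of_pos_of_lt (m := k + k) (by omega) (by omega)
  have hcard : #D = n / 2 := by rw [← card_toLeft_add_card_toRight]; omega
  refine ⟨hcard ▸ gamma_eq_card_of_forall_card_le hD.isDominating fun S hS => ?_, by omega⟩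
  have hmax : (petersen n k).maxDegree + 1 ≤ 4 :=
    Nat.succ_le_succ (maxDegree_le_of_forall_degree_le _ 3 petersen_degree_le_three)
  have hS := hS.card_le_mul_card.trans (Nat.mul_le_mul_right _ hmax)
  rw [Fintype.card_sum, ZMod.card] at hS
  omega

theorem efficient_dominating_petersen (n k : ℕ) (hn : 3 ≤ n) (hk1 : 1 ≤ k) (hk2 : 2 * k < n)
    (D : Set (ZMod n ⊕ ZMod n))
    (hD : ∀ v : ZMod n ⊕ ZMod n, ∃! d, d ∈ D ∧ (d = v ∨ (petersen n k).Adj d v)) :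
    gamma (petersen n k) = n / 2 ∧ n % 4 = 0 :=
  efficient_dominating_petersen_general n k hk1 hk2 D hD
end

section
/- For every c ≥ 3 with c ≡ 2 (mod 4) and every k ≥ 3 with k ≡ 3 (mod 4), γ(P(ck,k)) ≤ ck/2 + (k−1)/2. -/
open SimpleGraph

/-!
At every even index `i` choose exactly one of `v_i`, `u_i`: the outer vertex when `i ≡ 0 (mod 4)`
and `i ≤ k`, or `i ≡ 2 (mod 4)` and `i > k`, the inner one otherwise; these are `n / 2` vertices.
An odd outer vertex then has a chosen outer neighbour on the cycle, except `v_k`, where the phase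
switches. An inner vertex `u_i` with `i ≡ 1 (mod 4)` has the chosen neighbour `u_{i+k}`: since
`k ≡ 3 (mod 4)`, `i + k ≡ 0 (mod 4)`, and if the step wraps around `n ≡ 2 (mod 4)` it lands on an
index `≡ 2 (mod 4)` below `k`, again a chosen inner vertex. Likewise `u_{i-k}` serves
`i ≡ 3 (mod 4)` once `i > 2k`. The `(k - 1) / 2` inner vertices `u_i` with `i ≡ 3 (mod 4)`,
`i ≤ 2k` are added to the set; they also dominate `v_k`.
-/

open Finset

theorem gamma_le_card {V : Type*} {G : SimpleGraph V} {S : Finset V}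
    (hS : IsDominating G S) : gamma G ≤ #S :=
  Nat.sInf_le ⟨S, hS, rfl⟩

theorem Nat.card_filter_range_mod_eq (N : ℕ) {r v : ℕ} (hv : v < r) :
    #{i ∈ range N | i % r = v} = N / r + if v < N % r then 1 else 0 := by
  simpa [Nat.ModEq, Nat.mod_eq_of_lt hv, Nat.count_eq_card_filter_range] using
    Nat.count_modEq_card N (v.zero_le.trans_lt hv) v

namespace ZMod

variable {n : ℕ}

theorem natCast_eq_natCast_add {a b s : ℕ} (h : b = a + s ∨ b + n = a + s) :
    (b : ZMod n) = a + s := by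
  rcases h with rfl | h
  · exact Nat.cast_add a s
  · rw [← Nat.cast_add, ← h, Nat.cast_add, natCast_self, add_zero]

theorem natCast_ne_zero_of_lt {s : ℕ} (hs : 0 < s) (hsn : s < n) : (s : ZMod n) ≠ 0 := by
  rw [Ne, natCast_eq_zero_iff]
  exact Nat.not_dvd_of_pos_of_lt hs hsn

end ZMod

namespace Petersen

variable {n k : ℕ}

theorem adj_inl_inr (x : ZMod n) : (petersen n k).Adj (.inl x) (.inr x) := by
  rw [petersen, fromRel_adj]
  exact ⟨by simp, Or.inl rfl⟩

theorem adj_inl_add_one (hn : (1 : ZMod n) ≠ 0) (x : ZMod n) :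
    (petersen n k).Adj (.inl x) (.inl (x + 1)) := by
  rw [petersen, fromRel_adj]
  exact ⟨by simpa using hn, Or.inl rfl⟩

theorem adj_inr_add (hk : (k : ZMod n) ≠ 0) (x : ZMod n) :
    (petersen n k).Adj (.inr x) (.inr (x + k)) := by
  rw [petersen, fromRel_adj]
  exact ⟨by simpa using hk, Or.inl rfl⟩

theorem adj_inl_natCast (hn : 1 < n) {a b : ℕ} (h : b = a + 1 ∨ b + n = a + 1) :
    (petersen n k).Adj (.inl (a : ZMod n)) (.inl (b : ZMod n)) := by
  rw [ZMod.natCast_eq_natCast_add h, Nat.cast_one]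
  exact adj_inl_add_one (by exact_mod_cast ZMod.natCast_ne_zero_of_lt one_pos hn) _

theorem adj_inr_natCast (hk : 0 < k) (hkn : k < n) {a b : ℕ} (h : b = a + k ∨ b + n = a + k) :
    (petersen n k).Adj (.inr (a : ZMod n)) (.inr (b : ZMod n)) := by
  rw [ZMod.natCast_eq_natCast_add h]
  exact adj_inr_add (ZMod.natCast_ne_zero_of_lt hk hkn) _

def chosenVertex (n k i : ℕ) : ZMod n ⊕ ZMod n :=
  if i ≤ k ↔ i % 4 = 0 then .inl i else .inr i

def dominatingSet (n k : ℕ) : Finset (ZMod n ⊕ ZMod n) :=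
  {i ∈ range n | i % 2 = 0}.image (chosenVertex n k) ∪
    {i ∈ range (2 * k + 1) | i % 4 = 3}.image fun i : ℕ => .inr (i : ZMod n)

section

variable {i : ℕ}

theorem inl_mem_dominatingSet (hi : i < n) (h2 : i % 2 = 0) (h : i ≤ k ↔ i % 4 = 0) :
    .inl (i : ZMod n) ∈ dominatingSet n k :=
  mem_union_left _ <| mem_image.2 ⟨i, by simp [hi, h2], if_pos h⟩

theorem inr_mem_dominatingSet_of_even (hi : i < n) (h2 : i % 2 = 0) (h : ¬(i ≤ k ↔ i % 4 = 0)) :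
    .inr (i : ZMod n) ∈ dominatingSet n k :=
  mem_union_left _ <| mem_image.2 ⟨i, by simp [hi, h2], if_neg h⟩

theorem inr_mem_dominatingSet_of_mod_four (hi : i ≤ 2 * k) (h3 : i % 4 = 3) :
    .inr (i : ZMod n) ∈ dominatingSet n k :=
  mem_union_right _ <| mem_image.2 ⟨i, by simp [Nat.lt_succ_of_le hi, h3], rfl⟩

theorem inl_dominated (hn : n % 4 = 2) (hk : k % 4 = 3) (hi : i < n) :
    .inl (i : ZMod n) ∈ dominatingSet n k ∨
      ∃ u ∈ dominatingSet n k, (petersen n k).Adj u (.inl i) := by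
  have hn1 : 1 < n := by omega
  by_cases h2 : i % 2 = 0
  · by_cases h : i ≤ k ↔ i % 4 = 0
    · exact .inl (inl_mem_dominatingSet hi h2 h)
    · exact .inr ⟨_, inr_mem_dominatingSet_of_even hi h2 h, (adj_inl_inr _).symm⟩
  right
  rcases (by omega : i % 4 = 1 ∧ i ≤ k ∨ i % 4 = 1 ∧ k < i ∧ i + 1 < n ∨ i + 1 = n ∨
      i % 4 = 3 ∧ i ≤ k ∨ i % 4 = 3 ∧ k < i) with h | h | h | h | h
  · exact ⟨_, inl_mem_dominatingSet (i := i - 1) (by omega) (by omega) (by omega),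
      adj_inl_natCast hn1 (by omega)⟩
  · exact ⟨_, inl_mem_dominatingSet (i := i + 1) h.2.2 (by omega) (by omega),
      (adj_inl_natCast hn1 (by omega)).symm⟩
  · exact ⟨_, inl_mem_dominatingSet (i := 0) (by omega) rfl (by omega),
      (adj_inl_natCast hn1 (by omega)).symm⟩
  · exact ⟨_, inr_mem_dominatingSet_of_mod_four (by omega) h.1, (adj_inl_inr _).symm⟩
  · exact ⟨_, inl_mem_dominatingSet (i := i - 1) (by omega) (by omega) (by omega),
      adj_inl_natCast hn1 (by omega)⟩

theorem inr_dominated (hn : n % 4 = 2) (hk : k % 4 = 3) (hkn : k < n) (hi : i < n) :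
    .inr (i : ZMod n) ∈ dominatingSet n k ∨
      ∃ u ∈ dominatingSet n k, (petersen n k).Adj u (.inr i) := by
  have hk0 : 0 < k := by omega
  by_cases h2 : i % 2 = 0
  · by_cases h : i ≤ k ↔ i % 4 = 0
    · exact .inr ⟨_, inl_mem_dominatingSet hi h2 h, adj_inl_inr _⟩
    · exact .inl (inr_mem_dominatingSet_of_even hi h2 h)
  rcases (by omega : i % 4 = 1 ∧ i + k < n ∨ i % 4 = 1 ∧ n ≤ i + k ∨
      i % 4 = 3 ∧ i ≤ 2 * k ∨ i % 4 = 3 ∧ 2 * k < i) with h | h | h | h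
  · exact .inr ⟨_, inr_mem_dominatingSet_of_even (i := i + k) h.2 (by omega) (by omega),
      (adj_inr_natCast hk0 hkn (by omega)).symm⟩
  · exact .inr ⟨_, inr_mem_dominatingSet_of_even (i := i + k - n) (by omega) (by omega)
      (by omega), (adj_inr_natCast hk0 hkn (by omega)).symm⟩
  · exact .inl (inr_mem_dominatingSet_of_mod_four h.2 h.1)
  · exact .inr ⟨_, inr_mem_dominatingSet_of_even (i := i - k) (by omega) (by omega) (by omega),
      adj_inr_natCast hk0 hkn (by omega)⟩

end

theorem isDominating_dominatingSet (hn : n % 4 = 2) (hk : k % 4 = 3) (hkn : k < n) :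
    IsDominating (petersen n k) (dominatingSet n k) := by
  have : NeZero n := ⟨by omega⟩
  rintro (x | x) <;> rw [← ZMod.natCast_zmod_val x]
  · exact inl_dominated hn hk x.val_lt
  · exact inr_dominated hn hk hkn x.val_lt

theorem card_dominatingSet_le (hn : n % 2 = 0) (hk : k % 4 = 3) :
    #(dominatingSet n k) ≤ n / 2 + (k - 1) / 2 := by
  calc #(dominatingSet n k)
      ≤ #{i ∈ range n | i % 2 = 0} + #{i ∈ range (2 * k + 1) | i % 4 = 3} :=
        (card_union_le _ _).trans (add_le_add card_image_le card_image_le)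
    _ = n / 2 + (k - 1) / 2 := by
        rw [Nat.card_filter_range_mod_eq n two_pos,
          Nat.card_filter_range_mod_eq (2 * k + 1) (by norm_num : 3 < 4)]
        split_ifs <;> omega

theorem gamma_petersen_le (hn : n % 4 = 2) (hk : k % 4 = 3) (hkn : k < n) :
    gamma (petersen n k) ≤ n / 2 + (k - 1) / 2 :=
  (gamma_le_card (isDominating_dominatingSet hn hk hkn)).trans
    (card_dominatingSet_le (by omega) hk)

end Petersen

theorem petersen_upper_c2mod4_k3mod4_general (c k : ℕ) (hc4 : c % 4 = 2) (hk4 : k % 4 = 3) :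
    gamma (petersen (c * k) k) ≤ c * k / 2 + (k - 1) / 2 := by
  refine Petersen.gamma_petersen_le ?_ hk4 ?_
  · rw [Nat.mul_mod, hc4, hk4]
  · exact lt_mul_left (by omega) (by omega)

theorem petersen_upper_c2mod4_k3mod4 (c k : ℕ) (hc : 3 ≤ c) (hc4 : c % 4 = 2)
    (hk : 3 ≤ k) (hk4 : k % 4 = 3) :
    gamma (petersen (c * k) k) ≤ c * k / 2 + (k - 1) / 2 :=
  petersen_upper_c2mod4_k3mod4_general c k hc4 hk4
end

section
/- Let S be a dominating set of P(5k,k) with k ≥ 4, and for 0 ≤ i ≤ k−1 let S_i = S ∩ ({v_{i+jk} : 0 ≤ j ≤ 4} ∪ {u_{i+jk} : 0 ≤ j ≤ 4}). If for some ℓ there are two outer vertices v_x, v_y ∈ S_ℓ with |x − y| ∈ {2k, 3k}, then |S_ℓ| ≥ 4. -/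
open SimpleGraph

/-- The `i`-th column of a vertex subset of P(5k,k):
vertices with index congruent to `i` mod `k`. -/
def slice5 (k : ℕ) (S : Finset (ZMod (5 * k) ⊕ ZMod (5 * k))) (i : ℕ) :
    Set (ZMod (5 * k) ⊕ ZMod (5 * k)) :=
  {x | x ∈ S ∧ ∃ j ≤ 4, x = Sum.inl ((i + j * k : ℕ) : ZMod (5 * k)) ∨
        x = Sum.inr ((i + j * k : ℕ) : ZMod (5 * k))}

/-!
Index the column of `ℓ` by `ZMod 5`, level `j` holding `v_{ℓ+jk}` and `u_{ℓ+jk}`. Every neighbour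
of an inner vertex `u_{ℓ+jk}` lies in the same column (`v_{ℓ+jk}` and `u_{ℓ+(j±1)k}`), so `S_ℓ`
alone dominates the inner vertices of the column. The condition on `|x - y|` says that `v_x, v_y`
sit at levels `a` and `a + 2`. Neither dominates an inner vertex at level `a + 1`, `a + 3` or
`a + 4`, and no single vertex dominates all three of these, so `S_ℓ` has two further elements.
-/

theorem ZMod.natCast_eq_add_or_natCast_eq_add {n m x y : ℕ} (hm : m ≤ n)
    (h : max x y - min x y = m ∨ max x y - min x y = n - m) :
    (y : ZMod n) = x + m ∨ (x : ZMod n) = y + m := by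
  have hn : (n : ZMod n) = 0 := ZMod.natCast_self n
  rcases le_total x y with hxy | hxy <;>
    simp only [max_eq_left, max_eq_right, min_eq_left, min_eq_right, hxy] at h <;>
    rcases h with h | h
  · exact .inl (by rw [← Nat.cast_add]; congr 1; omega)
  · refine .inr ?_
    rw [← add_zero (x : ZMod n), ← hn]
    exact_mod_cast congrArg _ (by omega)
  · exact .inr (by rw [← Nat.cast_add]; congr 1; omega)
  · refine .inl ?_
    rw [← add_zero (y : ZMod n), ← hn]
    exact_mod_cast congrArg _ (by omega)

theorem Set.four_le_ncard_of_meets_three {α : Type*} {T A B C : Set α} (hT : T.Finite)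
    (hA : (T ∩ A).Nonempty) (hB : (T ∩ B).Nonempty) (hC : (T ∩ C).Nonempty)
    (hABC : A ∩ B ∩ C = ∅) {p q : α} (hp : p ∈ T) (hq : q ∈ T) (hpq : p ≠ q)
    (hpU : p ∉ A ∪ B ∪ C) (hqU : q ∉ A ∪ B ∪ C) : 4 ≤ T.ncard := by
  set U := A ∪ B ∪ C
  have hin : 1 < (T ∩ U).ncard := by
    obtain ⟨a, haT, haA⟩ := hA
    obtain ⟨b, hbT, hbB⟩ := hB
    obtain ⟨c, hcT, hcC⟩ := hC
    rw [Set.one_lt_ncard_iff (hT.inter_of_left U)]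
    by_cases hab : a = b
    · refine ⟨a, c, ⟨haT, .inl (.inl haA)⟩, ⟨hcT, .inr hcC⟩, ?_⟩
      rintro rfl
      exact (Set.eq_empty_iff_forall_notMem.1 hABC) a ⟨⟨haA, hab ▸ hbB⟩, hcC⟩
    · exact ⟨a, b, ⟨haT, .inl (.inl haA)⟩, ⟨hbT, .inl (.inr hbB)⟩, hab⟩
  have hout : 1 < (T \ U).ncard :=
    (Set.one_lt_ncard_iff hT.sdiff).2 ⟨p, q, ⟨hp, hpU⟩, ⟨hq, hqU⟩, hpq⟩
  rw [← Set.ncard_inter_add_ncard_sdiff_eq_ncard T U hT]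
  omega

-- `j ↦ j * k`, well defined on `ZMod 5` because `5 * k = 0` in `ZMod (5 * k)`.
def columnShift (k : ℕ) : ZMod 5 →+ ZMod (5 * k) :=
  ZMod.lift 5 ⟨zmultiplesHom _ (k : ZMod (5 * k)), by
    rw [zmultiplesHom_apply, zsmul_eq_mul]
    exact_mod_cast ZMod.natCast_self (5 * k)⟩

theorem columnShift_natCast (k j : ℕ) : columnShift k j = ((j * k : ℕ) : ZMod (5 * k)) := by
  rw [← Int.cast_natCast, columnShift, ZMod.lift_coe]
  simp

theorem columnShift_one (k : ℕ) : columnShift k 1 = k := by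
  simpa using columnShift_natCast k 1

theorem columnShift_injective {k : ℕ} (hk : 0 < k) : Function.Injective (columnShift k) := by
  rw [columnShift, ZMod.lift_injective]
  intro m hm
  simp only [zmultiplesHom_apply, zsmul_eq_mul] at hm
  rw [ZMod.intCast_zmod_eq_zero_iff_dvd]
  have : ((5 * k : ℕ) : ℤ) ∣ m * k := by
    rw [← ZMod.intCast_zmod_eq_zero_iff_dvd]; push_cast; exact hm
  rw [Nat.cast_mul] at this
  exact Int.dvd_of_mul_dvd_mul_right (by omega : (k : ℤ) ≠ 0) this

def columnIndex (k ℓ : ℕ) (j : ZMod 5) : ZMod (5 * k) := ℓ + columnShift k j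

theorem columnIndex_natCast (k ℓ j : ℕ) :
    columnIndex k ℓ j = ((ℓ + j * k : ℕ) : ZMod (5 * k)) := by
  rw [columnIndex, columnShift_natCast, Nat.cast_add]

theorem columnIndex_add (k ℓ : ℕ) (i j : ZMod 5) :
    columnIndex k ℓ (i + j) = columnIndex k ℓ i + columnShift k j := by
  rw [columnIndex, columnIndex, map_add, add_assoc]

theorem columnIndex_sub (k ℓ : ℕ) (i j : ZMod 5) :
    columnIndex k ℓ (i - j) = columnIndex k ℓ i - columnShift k j := by
  rw [columnIndex, columnIndex, map_sub, add_sub_assoc]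

-- Outer and inner vertices of level `j` in the column of `ℓ`: `v_{ℓ+jk}` and `u_{ℓ+jk}`.
def column (k ℓ : ℕ) : ZMod 5 ⊕ ZMod 5 → ZMod (5 * k) ⊕ ZMod (5 * k) :=
  Sum.map (columnIndex k ℓ) (columnIndex k ℓ)

theorem column_injective {k : ℕ} (hk : 0 < k) (ℓ : ℕ) : Function.Injective (column k ℓ) :=
  Function.Injective.sumMap ((add_right_injective _).comp (columnShift_injective hk))
    ((add_right_injective _).comp (columnShift_injective hk))

theorem slice5_eq_inter_range (k ℓ : ℕ) (S : Finset (ZMod (5 * k) ⊕ ZMod (5 * k))) :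
    slice5 k S ℓ = ↑S ∩ Set.range (column k ℓ) := by
  ext v
  refine and_congr_right fun _ => ⟨?_, ?_⟩
  · rintro ⟨j, -, rfl | rfl⟩
    exacts [⟨.inl j, by simp [column, columnIndex_natCast]⟩,
      ⟨.inr j, by simp [column, columnIndex_natCast]⟩]
  · rintro ⟨w | w, rfl⟩ <;> refine ⟨w.val, by have := w.val_lt; omega, ?_⟩
    · left; rw [← columnIndex_natCast, ZMod.natCast_zmod_val]; rfl
    · right; rw [← columnIndex_natCast, ZMod.natCast_zmod_val]; rfl

theorem exists_columnIndex_of_inl_mem_slice5 {k ℓ : ℕ} {S : Finset (ZMod (5 * k) ⊕ ZMod (5 * k))}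
    {i : ZMod (5 * k)} (h : .inl i ∈ slice5 k S ℓ) : ∃ j, columnIndex k ℓ j = i := by
  rw [slice5_eq_inter_range] at h
  obtain ⟨⟨j⟩ | j, hj⟩ := h.2
  · exact ⟨j, Sum.inl.inj hj⟩
  · exact absurd hj Sum.inr_ne_inl

theorem petersen_adj_inr {n k : ℕ} {d : ZMod n ⊕ ZMod n} {i : ZMod n}
    (h : (petersen n k).Adj d (.inr i)) :
    d = .inl i ∨ d = .inr (i - k) ∨ d = .inr (i + k) := by
  obtain ⟨-, h | h⟩ := (SimpleGraph.fromRel_adj _ _ _).1 h <;>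
    rcases d with j | j <;> simp only at h
  · exact .inl (congrArg _ h.symm)
  · exact .inr (.inl (congrArg _ (eq_sub_of_add_eq h.symm)))
  · exact .inr (.inr (congrArg _ h))

-- The closed neighbourhood of the inner vertex `u_{ℓ+jk}`, pulled back along `column k ℓ`.
def innerNbhd (j : ZMod 5) : Finset (ZMod 5 ⊕ ZMod 5) :=
  {.inl j, .inr (j - 1), .inr (j + 1), .inr j}

theorem IsDominating.column_preimage_inter_innerNbhd_nonempty {k : ℕ} {ℓ : ℕ}
    {S : Finset (ZMod (5 * k) ⊕ ZMod (5 * k))} (hS : IsDominating (petersen (5 * k) k) ↑S)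
    (j : ZMod 5) : (column k ℓ ⁻¹' ↑S ∩ ↑(innerNbhd j)).Nonempty := by
  rcases hS (.inr (columnIndex k ℓ j)) with h | ⟨d, hd, hadj⟩
  · exact ⟨.inr j, h, by simp [innerNbhd]⟩
  rcases petersen_adj_inr hadj with rfl | rfl | rfl
  · exact ⟨.inl j, hd, by simp [innerNbhd]⟩
  · refine ⟨.inr (j - 1), ?_, by simp [innerNbhd]⟩
    rwa [Set.mem_preimage, column, Sum.map_inr, columnIndex_sub, columnShift_one]
  · refine ⟨.inr (j + 1), ?_, by simp [innerNbhd]⟩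
    rwa [Set.mem_preimage, column, Sum.map_inr, columnIndex_add, columnShift_one]

theorem innerNbhd_inter_innerNbhd_inter_innerNbhd (a : ZMod 5) :
    innerNbhd (a + 1) ∩ innerNbhd (a + 3) ∩ innerNbhd (a + 4) = ∅ := by
  revert a; decide

theorem inl_notMem_innerNbhd_union (a : ZMod 5) :
    Sum.inl a ∉ innerNbhd (a + 1) ∪ innerNbhd (a + 3) ∪ innerNbhd (a + 4) ∧
      Sum.inl (a + 2) ∉ innerNbhd (a + 1) ∪ innerNbhd (a + 3) ∪ innerNbhd (a + 4) := by
  revert a; decide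

theorem four_le_ncard_slice5 {k : ℕ} (hk : 0 < k) (ℓ : ℕ)
    {S : Finset (ZMod (5 * k) ⊕ ZMod (5 * k))} (hS : IsDominating (petersen (5 * k) k) ↑S)
    {a : ZMod 5} (h₀ : .inl (columnIndex k ℓ a) ∈ S) (h₂ : .inl (columnIndex k ℓ (a + 2)) ∈ S) :
    4 ≤ (slice5 k S ℓ).ncard := by
  rw [slice5_eq_inter_range, ← Set.image_preimage_eq_inter_range,
    Set.ncard_image_of_injective _ (column_injective hk ℓ)]
  obtain ⟨h₀U, h₂U⟩ := inl_notMem_innerNbhd_union a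
  refine Set.four_le_ncard_of_meets_three (p := .inl a) (q := .inl (a + 2)) (Set.toFinite _)
    (hS.column_preimage_inter_innerNbhd_nonempty (a + 1))
    (hS.column_preimage_inter_innerNbhd_nonempty (a + 3))
    (hS.column_preimage_inter_innerNbhd_nonempty (a + 4)) ?_ h₀ h₂ (by simp; decide) ?_ ?_
  · exact_mod_cast innerNbhd_inter_innerNbhd_inter_innerNbhd a
  · exact_mod_cast h₀U
  · exact_mod_cast h₂U

theorem slice5_two_outer_general (k : ℕ) (hk : 4 ≤ k)
    (S : Finset (ZMod (5 * k) ⊕ ZMod (5 * k))) (hS : IsDominating (petersen (5 * k) k) ↑S)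
    (ℓ : ℕ) (x y : ℕ)
    (hx : Sum.inl ((x : ℕ) : ZMod (5 * k)) ∈ slice5 k S ℓ)
    (hy : Sum.inl ((y : ℕ) : ZMod (5 * k)) ∈ slice5 k S ℓ)
    (hxy : max x y - min x y = 2 * k ∨ max x y - min x y = 3 * k) :
    4 ≤ (slice5 k S ℓ).ncard := by
  have hk₀ : 0 < k := by omega
  have hshift : columnShift k 2 = ((2 * k : ℕ) : ZMod (5 * k)) := by
    simpa using columnShift_natCast k 2
  obtain ⟨a, ha⟩ := exists_columnIndex_of_inl_mem_slice5 hx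
  obtain ⟨b, hb⟩ := exists_columnIndex_of_inl_mem_slice5 hy
  rcases ZMod.natCast_eq_add_or_natCast_eq_add (n := 5 * k) (m := 2 * k) (x := x) (y := y)
    (by omega) (by rwa [show 5 * k - 2 * k = 3 * k by omega]) with h | h
  · refine four_le_ncard_slice5 hk₀ ℓ hS (ha ▸ hx.1) ?_
    rw [columnIndex_add, hshift, ha, ← h]
    exact hy.1
  · refine four_le_ncard_slice5 hk₀ ℓ hS (hb ▸ hy.1) ?_
    rw [columnIndex_add, hshift, hb, ← h]
    exact hx.1

theorem slice5_two_outer (k : ℕ) (hk : 4 ≤ k)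
    (S : Finset (ZMod (5 * k) ⊕ ZMod (5 * k))) (hS : IsDominating (petersen (5 * k) k) ↑S)
    (ℓ : ℕ) (hℓ : ℓ < k) (x y : ℕ)
    (hx : Sum.inl ((x : ℕ) : ZMod (5 * k)) ∈ slice5 k S ℓ)
    (hy : Sum.inl ((y : ℕ) : ZMod (5 * k)) ∈ slice5 k S ℓ)
    (hxy : max x y - min x y = 2 * k ∨ max x y - min x y = 3 * k) :
    4 ≤ (slice5 k S ℓ).ncard :=
  slice5_two_outer_general k hk S hS ℓ x y hx hy hxy
end

section
/- For every k ≥ 4, γ(P(5k,k)) ≥ 3k: every dominating set of the generalized Petersen graph P(5k,k) has at least 3k vertices. -/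
/-!
Cut the vertices of P(5k,k) into the k columns {v_{r+jk}, u_{r+jk} : j < 5}. Inside a column the
inner vertices form the 5-cycle j ↦ j ± 1 (mod 5), outer edges join position j of column r to
position j of column r + 1, and column r + k is column r rotated by one position. Record a set S
column by column by 5-bit masks: its outer vertices, its inner vertices, and the outer vertices
dominated neither from their own nor from the previous column, which S must then dominate from the
next column. A potential on pairs (outer mask, undominated mask), found by computer, makes every
column contain at least 3 + (potential after it) - (potential before it) vertices of a dominating
set; this is a finite check over masks. The potential is invariant under rotation, so it
telescopes away over the k columns and leaves |S| ≥ 3k.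
-/

open SimpleGraph

open Finset

namespace GeneralizedPetersen

section Adjacency

variable {n k : ℕ} {u : ZMod n ⊕ ZMod n} {i : ZMod n}

lemma eq_of_adj_inl (h : (petersen n k).Adj u (.inl i)) :
    u = .inl (i - 1) ∨ u = .inl (i + 1) ∨ u = .inr i := by
  rcases u with m | m <;> simp only [petersen, fromRel_adj] at h
  · rcases h.2 with rfl | rfl <;> simp
  · rcases h.2 with h | rfl <;> simp_all

lemma eq_of_adj_inr (h : (petersen n k).Adj u (.inr i)) :
    u = .inr (i - k) ∨ u = .inr (i + k) ∨ u = .inl i := by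
  rcases u with m | m <;> simp only [petersen, fromRel_adj] at h
  · rcases h.2 with rfl | h <;> simp_all
  · rcases h.2 with rfl | rfl <;> simp

variable {S : Set (ZMod n ⊕ ZMod n)}

lemma inl_mem_of_isDominating (hS : IsDominating (petersen n k) S) (i : ZMod n) :
    .inl (i - 1) ∈ S ∨ .inl i ∈ S ∨ .inl (i + 1) ∈ S ∨ .inr i ∈ S := by
  rcases hS (.inl i) with h | ⟨u, hu, hadj⟩
  · tauto
  · rcases eq_of_adj_inl hadj with rfl | rfl | rfl <;> tauto

lemma inr_mem_of_isDominating (hS : IsDominating (petersen n k) S) (i : ZMod n) :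
    .inr (i - k) ∈ S ∨ .inr i ∈ S ∨ .inr (i + k) ∈ S ∨ .inl i ∈ S := by
  rcases hS (.inr i) with h | ⟨u, hu, hadj⟩
  · tauto
  · rcases eq_of_adj_inr hadj with rfl | rfl | rfl <;> tauto

end Adjacency

section Masks

def ofBits : ℕ → (ℕ → Bool) → ℕ
  | 0, _ => 0
  | n + 1, g => Nat.bit (g 0) (ofBits n fun j => g (j + 1))

lemma ofBits_lt_two_pow (n : ℕ) (g : ℕ → Bool) : ofBits n g < 2 ^ n := by
  induction n generalizing g with
  | zero => simp [ofBits]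
  | succ n ih => simpa [ofBits] using ih _

lemma testBit_ofBits {n j : ℕ} (g : ℕ → Bool) (hj : j < n) : (ofBits n g).testBit j = g j := by
  induction n generalizing g j with
  | zero => omega
  | succ n ih =>
    cases j with
    | zero => simp [ofBits]
    | succ j => simpa [ofBits, Nat.testBit_bit_succ] using ih _ (by omega)

lemma ofBits_eq_of_testBit {n m : ℕ} {g : ℕ → Bool} (hm : m < 2 ^ n)
    (h : ∀ j < n, g j = m.testBit j) : ofBits n g = m := by
  refine Nat.eq_of_testBit_eq fun j => ?_
  by_cases hj : j < n
  · rw [testBit_ofBits g hj, h j hj]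
  · have hle : 2 ^ n ≤ 2 ^ j := Nat.pow_le_pow_right two_pos (by omega)
    rw [Nat.testBit_lt_two_pow ((ofBits_lt_two_pow n g).trans_le hle),
      Nat.testBit_lt_two_pow (hm.trans_le hle)]

def card5 (m : ℕ) : ℕ := #{j ∈ range 5 | m.testBit j}

def rot5 (m : ℕ) : ℕ := (m >>> 1) ||| ((m &&& 1) <<< 4)

lemma rot5_lt : ∀ m < 32, rot5 m < 32 := by decide

lemma testBit_rot5 : ∀ m < 32, ∀ j < 5, (rot5 m).testBit j = m.testBit ((j + 1) % 5) := by
  decide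

end Masks

section Potential

/-- Found by computer: a solution with values in 0..3 of the difference constraints
`three_add_potential_le`, stored two bits per entry. -/
def potentialTable : ℕ := 21544670714207338200476584459113301306962735113143656021420230285016436759245260595464800941015275642459145307281050457383188309625982648353599807549282920865602465440346035125442145039834033675191868358146426209170749995361057791689798137601572508409713186959781028554814868311578698930184630758830912296878980187561557572306168416545583963378873308094253580478166547359065032029908791042155145848054973612503263011246330415613043715942892510839887924696568650601581701481092296251344139593057435423906558117200599244312591761276638358820014815958637899716589982536180733995603399453209763531280851328395798163139241

def potential (A B : ℕ) : ℕ := (potentialTable >>> (2 * A + 64 * B)) &&& 3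

lemma potential_rot5 : ∀ A < 32, ∀ B < 32, potential (rot5 A) (rot5 B) = potential A B := by
  decide

set_option synthInstance.maxSize 1000 in
/-- `A`, `B` are the outer and undominated masks of a column, `o`, `a` the outer and inner masks of
the next one, whose undominated mask is then the complement of `A ∪ o ∪ a`. The hypotheses say
that the outer vertices left undominated have their right neighbours in the set, and that the
inner 5-cycle of the next column is dominated. -/
theorem three_add_potential_le : ∀ A < 32, ∀ o < 32, ∀ B < 32,
    (∀ j < 5, B.testBit j → o.testBit j ∧ !A.testBit j) → ∀ a < 32,
    (∀ j < 5, o.testBit j || a.testBit ((j + 4) % 5) || a.testBit j || a.testBit ((j + 1) % 5)) →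
    3 + potential o (31 ^^^ (A ||| o ||| a)) ≤ card5 o + card5 a + potential A B := by
  decide +kernel

end Potential

section Columns

variable {k : ℕ}

lemma add_natCast_mul_mod_five (r : ZMod (5 * k)) (j : ℕ) :
    r + (j : ZMod (5 * k)) * k = r + ((j % 5 : ℕ) : ZMod (5 * k)) * k := by
  have h5k : (5 : ZMod (5 * k)) * k = 0 := by exact_mod_cast ZMod.natCast_self (5 * k)
  conv_lhs => rw [← Nat.mod_add_div j 5]
  push_cast
  linear_combination ((j / 5 : ℕ) : ZMod (5 * k)) * h5k

lemma add_mul_add_self (r : ZMod (5 * k)) (j : ℕ) :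
    r + (j : ZMod (5 * k)) * k + k = r + ((j + 1) % 5 : ℕ) * k := by
  rw [← add_natCast_mul_mod_five]
  push_cast
  ring

lemma add_mul_sub_self (r : ZMod (5 * k)) (j : ℕ) :
    r + (j : ZMod (5 * k)) * k - k = r + ((j + 4) % 5 : ℕ) * k := by
  rw [← add_natCast_mul_mod_five, eq_comm, ← sub_eq_zero]
  have h5k : (5 : ZMod (5 * k)) * k = 0 := by exact_mod_cast ZMod.natCast_self (5 * k)
  push_cast
  linear_combination h5k

variable (P : ZMod (5 * k) → Prop) [DecidablePred P]

def columnMask (r : ZMod (5 * k)) : ℕ := ofBits 5 fun j => P (r + j * k)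

lemma columnMask_lt (r : ZMod (5 * k)) : columnMask P r < 32 := ofBits_lt_two_pow 5 _

lemma testBit_columnMask (r : ZMod (5 * k)) {j : ℕ} (hj : j < 5) :
    (columnMask P r).testBit j = decide (P (r + j * k)) :=
  testBit_ofBits _ hj

lemma columnMask_add_self (r : ZMod (5 * k)) :
    columnMask P (r + k) = rot5 (columnMask P r) := by
  refine ofBits_eq_of_testBit (rot5_lt _ (columnMask_lt P r)) fun j hj => ?_
  rw [testBit_rot5 _ (columnMask_lt P r) j hj, testBit_columnMask P r (Nat.mod_lt _ (by norm_num)),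
    add_right_comm, add_mul_add_self]

lemma card5_columnMask (r : ZMod (5 * k)) :
    card5 (columnMask P r) = #{j ∈ range 5 | P (r + ((j : ℕ) : ZMod (5 * k)) * k)} := by
  unfold card5
  congr 1
  refine filter_congr fun j hj => ?_
  rw [testBit_columnMask P r (mem_range.mp hj), decide_eq_true_iff]

end Columns

section DominatingSet

variable {k : ℕ} (S : Finset (ZMod (5 * k) ⊕ ZMod (5 * k)))

def outerMask (r : ZMod (5 * k)) : ℕ := columnMask (fun x => .inl x ∈ S) r

def innerMask (r : ZMod (5 * k)) : ℕ := columnMask (fun x => .inr x ∈ S) r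

def undominatedMask (r : ZMod (5 * k)) : ℕ :=
  columnMask (fun x => .inl (x - 1) ∉ S ∧ .inl x ∉ S ∧ .inr x ∉ S) r

def columnPotential (r : ZMod (5 * k)) : ℕ := potential (outerMask S r) (undominatedMask S r)

def columnCard (r : ZMod (5 * k)) : ℕ :=
  #{j ∈ range 5 | .inl (r + (j : ZMod (5 * k)) * k) ∈ S} +
    #{j ∈ range 5 | .inr (r + (j : ZMod (5 * k)) * k) ∈ S}

lemma columnPotential_add_self (r : ZMod (5 * k)) :
    columnPotential S (r + k) = columnPotential S r := by
  simp only [columnPotential, outerMask, undominatedMask, columnMask_add_self]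
  exact potential_rot5 _ (columnMask_lt _ r) _ (columnMask_lt _ r)

variable {S}

lemma columnPotential_step (hS : IsDominating (petersen (5 * k) k) ↑S) (r : ZMod (5 * k)) :
    3 + columnPotential S (r + 1) ≤ columnCard S (r + 1) + columnPotential S r := by
  have hA j (hj : j < 5) : (outerMask S r).testBit j = decide (.inl (r + j * k) ∈ S) :=
    testBit_columnMask _ r hj
  have ho j (hj : j < 5) : (outerMask S (r + 1)).testBit j = decide (.inl (r + 1 + j * k) ∈ S) :=
    testBit_columnMask _ _ hj
  have ha j (hj : j < 5) : (innerMask S (r + 1)).testBit j = decide (.inr (r + 1 + j * k) ∈ S) :=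
    testBit_columnMask _ _ hj
  have hdemand : ∀ j < 5, (undominatedMask S r).testBit j →
      (outerMask S (r + 1)).testBit j ∧ !(outerMask S r).testBit j := by
    intro j hj hB
    rw [undominatedMask, testBit_columnMask _ r hj, decide_eq_true_iff] at hB
    have := inl_mem_of_isDominating hS (r + j * k)
    rw [ho j hj, hA j hj, add_right_comm]
    simp_all
  have hinner : ∀ j < 5, (outerMask S (r + 1)).testBit j ||
      (innerMask S (r + 1)).testBit ((j + 4) % 5) || (innerMask S (r + 1)).testBit j ||
      (innerMask S (r + 1)).testBit ((j + 1) % 5) := by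
    intro j hj
    have := inr_mem_of_isDominating hS (r + 1 + j * k)
    rw [add_mul_sub_self, add_mul_add_self] at this
    rw [ho j hj, ha j hj, ha _ (Nat.mod_lt _ (by norm_num)), ha _ (Nat.mod_lt _ (by norm_num))]
    simp only [Finset.mem_coe, Bool.or_eq_true, decide_eq_true_iff] at this ⊢
    tauto
  have hnext : undominatedMask S (r + 1) =
      31 ^^^ (outerMask S r ||| outerMask S (r + 1) ||| innerMask S (r + 1)) := by
    refine ofBits_eq_of_testBit (Nat.xor_lt_two_pow (by norm_num) (Nat.or_lt_two_pow
      (Nat.or_lt_two_pow (columnMask_lt _ r) (columnMask_lt _ _)) (columnMask_lt _ _)))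
      fun j hj => ?_
    have h31 : Nat.testBit 31 j = true := by interval_cases j <;> rfl
    have hsub : r + 1 + j * k - 1 = r + j * k := by ring
    rw [Nat.testBit_xor, h31, Nat.testBit_or, Nat.testBit_or, hA j hj, ho j hj, ha j hj]
    simp [hsub, Bool.and_assoc]
  have key := three_add_potential_le (outerMask S r) (columnMask_lt _ r)
    (outerMask S (r + 1)) (columnMask_lt _ _) (undominatedMask S r) (columnMask_lt _ r) hdemand
    (innerMask S (r + 1)) (columnMask_lt _ _) hinner
  rw [← hnext] at key
  simpa only [columnCard, columnPotential, outerMask, innerMask, card5_columnMask] using key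

lemma three_mul_add_columnPotential_le (hS : IsDominating (petersen (5 * k) k) ↑S)
    (r : ZMod (5 * k)) (m : ℕ) :
    3 * m + columnPotential S (r + m) ≤
      ∑ t ∈ range m, columnCard S (r + t + 1) + columnPotential S r := by
  induction m with
  | zero => simp
  | succ m ih =>
    have := columnPotential_step hS (r + m)
    rw [sum_range_succ]
    push_cast at this ⊢
    rw [← add_assoc]
    omega

lemma natCast_add_mul_injOn :
    Set.InjOn (fun p : ℕ × ℕ => (p.1 : ZMod (5 * k)) + p.2 * k) ↑(range k ×ˢ range 5) := by
  rintro ⟨t, j⟩ htj ⟨t', j'⟩ htj' h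
  simp only [coe_product, coe_range, Set.mem_prod, Set.mem_Iio] at htj htj'
  have hlt : ∀ {t j : ℕ}, t < k → j < 5 → t + j * k < 5 * k := fun ht hj => by nlinarith
  have h' : t + j * k = t' + j' * k := by
    have hcast : ((t + j * k : ℕ) : ZMod (5 * k)) = ((t' + j' * k : ℕ) : ZMod (5 * k)) := by
      push_cast
      exact h
    have := (ZMod.natCast_eq_natCast_iff' _ _ _).mp hcast
    rwa [Nat.mod_eq_of_lt (hlt htj.1 htj.2), Nat.mod_eq_of_lt (hlt htj'.1 htj'.2)] at this
  have hk : 0 < k := by omega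
  have ht : t = t' := by
    simpa [Nat.add_mul_mod_self_right, Nat.mod_eq_of_lt htj.1, Nat.mod_eq_of_lt htj'.1]
      using congrArg (· % k) h'
  have hj : j = j' := by
    simpa [Nat.add_mul_div_right _ _ hk, Nat.div_eq_of_lt htj.1, Nat.div_eq_of_lt htj'.1]
      using congrArg (· / k) h'
  rw [ht, hj]

lemma sum_columnCard_le : ∑ t ∈ range k, columnCard S t ≤ #S := by
  let idx (p : ℕ × ℕ) : ZMod (5 * k) := p.1 + p.2 * k
  let T := range k ×ˢ range 5
  have hsum : ∑ t ∈ range k, columnCard S t = #{c ∈ T.disjSum T | Sum.map idx idx c ∈ S} := by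
    simp only [columnCard, sum_add_distrib, card_filter, sum_disjSum, T, sum_product, idx,
      Sum.map_inl, Sum.map_inr]
    rfl
  rw [hsum]
  refine card_le_card_of_injOn _ (fun c hc => (mem_filter.mp hc).2) ?_
  rintro (p | p) hp (q | q) hq h <;>
    simp only [coe_filter, Set.mem_ofPred_eq, inl_mem_disjSum, inr_mem_disjSum, Sum.map_inl,
      Sum.map_inr, Sum.inl.injEq, Sum.inr.injEq, reduceCtorEq] at hp hq h ⊢
  · exact natCast_add_mul_injOn hp.1 hq.1 h
  · exact natCast_add_mul_injOn hp.1 hq.1 h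

end DominatingSet

end GeneralizedPetersen

open GeneralizedPetersen in
theorem gamma_P5k_lower_general (k : ℕ)
    (S : Finset (ZMod (5 * k) ⊕ ZMod (5 * k)))
    (hS : IsDominating (petersen (5 * k) k) ↑S) :
    3 * k ≤ S.card := by
  have h := three_mul_add_columnPotential_le hS (-1) k
  rw [columnPotential_add_self] at h
  simp only [neg_add_cancel_comm] at h
  linarith [sum_columnCard_le (S := S)]

theorem gamma_P5k_lower (k : ℕ) (hk : 4 ≤ k)
    (S : Finset (ZMod (5 * k) ⊕ ZMod (5 * k)))
    (hS : IsDominating (petersen (5 * k) k) ↑S) :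
    3 * k ≤ S.card :=
  gamma_P5k_lower_general k S hS
end

section
/- Let S be a dominating set of P(6k,k) with k ≥ 4, and for 0 ≤ i ≤ k−1 let S_i = S ∩ ({v_{i+jk} : 0 ≤ j ≤ 5} ∪ {u_{i+jk} : 0 ≤ j ≤ 5}). Then for every i (indices mod k), |S_{i−1}| + |S_i| + |S_{i+1}| ≥ 10. -/
open SimpleGraph

/-- The `i`-th column of a vertex subset of P(6k,k). -/
def slice6 (k : ℕ) (S : Finset (ZMod (6 * k) ⊕ ZMod (6 * k))) (i : ℕ) :
    Set (ZMod (6 * k) ⊕ ZMod (6 * k)) :=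
  {x | x ∈ S ∧ ∃ j ≤ 5, x = Sum.inl ((i + j * k : ℕ) : ZMod (6 * k)) ∨
        x = Sum.inr ((i + j * k : ℕ) : ZMod (6 * k))}

/-!
Index the column through `c` by `j : ZMod 6`, the vertex positions being `c + j k`. The inner
vertices of a column form the 6-cycle `j ~ j ± 1`, and each of them is also dominated by its outer
partner; an outer vertex of the middle column is dominated only from its own column or by the
outer vertices with the same index in the two neighbouring columns. Writing `A, X`, `B, Y`, `C, Z`
for the indices of inner and outer members of `S` in the three columns, counting closed
neighbourhoods in the cycles gives `6 ≤ 3|A| + |X|` (and likewise for `B, Y` and `C, Z`), and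
the outer vertices of the middle column give `6 ≤ |B| + |Y| + |X ∪ Z|`. These inequalities force
a total of at least 10 unless a side column, say the left one, has `A = {t}`. Then `X` contains
every index outside `t - 1, t, t + 1`, and whatever dominates index `t + 3` of the middle cycle has
an index in `B ∪ Y` that also lies in `X`, so the middle count improves to `7`.
-/

open Finset

def CycleDominates {n : ℕ} (A X : Finset (ZMod n)) : Prop :=
  ∀ j, j ∈ A ∨ j + 1 ∈ A ∨ j - 1 ∈ A ∨ j ∈ X

namespace CycleDominates

variable {n : ℕ} {A X : Finset (ZMod n)}

theorem mono (h : CycleDominates A X) {X' : Finset (ZMod n)} (hX : X ⊆ X') :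
    CycleDominates A X' := fun j => by
  rcases h j with h | h | h | h
  exacts [Or.inl h, Or.inr (Or.inl h), Or.inr (Or.inr (Or.inl h)), Or.inr (Or.inr (Or.inr (hX h)))]

theorem le_three_mul_card_add_card [NeZero n] (h : CycleDominates A X) : n ≤ 3 * #A + #X := by
  have hcover : (univ : Finset (ZMod n)) ⊆ A ∪ A.image (· - 1) ∪ A.image (· + 1) ∪ X := by
    intro j _
    simp only [mem_union, mem_image]
    rcases h j with h | h | h | h
    · exact Or.inl (Or.inl (Or.inl h))
    · exact Or.inl (Or.inl (Or.inr ⟨j + 1, h, add_sub_cancel_right j 1⟩))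
    · exact Or.inl (Or.inr ⟨j - 1, h, sub_add_cancel j 1⟩)
    · exact Or.inr h
  calc n = #(univ : Finset (ZMod n)) := by simp
    _ ≤ #(A ∪ A.image (· - 1) ∪ A.image (· + 1) ∪ X) := card_le_card hcover
    _ ≤ #A + #A + #A + #X := by
        grw [card_union_le, card_union_le, card_union_le, card_image_le, card_image_le]
    _ = 3 * #A + #X := by ring

end CycleDominates

theorem seven_le_card_of_cycleDominates_singleton {B Y W : Finset (ZMod 6)} {t : ZMod 6}
    (hB : CycleDominates B Y) (hW : CycleDominates {t} W)
    (hcover : ∀ j, j ∈ B ∨ j ∈ Y ∨ j ∈ W) : 7 ≤ #B + #Y + #W := by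
  obtain ⟨d, hd, hdBY⟩ : ∃ d ∈ ({2, 3, 4} : Finset (ZMod 6)), t + d ∈ B ∪ Y := by
    rcases hB (t + 3) with h | h | h | h
    · exact ⟨3, by decide, mem_union_left _ h⟩
    · exact ⟨4, by decide, mem_union_left _ (by ring_nf at h ⊢; exact h)⟩
    · exact ⟨2, by decide, mem_union_left _ (by ring_nf at h ⊢; exact h)⟩
    · exact ⟨3, by decide, mem_union_right _ h⟩
  have hdW : t + d ∈ W := by
    have far : ∀ t d : ZMod 6, d ∈ ({2, 3, 4} : Finset (ZMod 6)) →
        t + d ≠ t ∧ t + d + 1 ≠ t ∧ t + d - 1 ≠ t := by decide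
    obtain ⟨h0, h1, h2⟩ := far t d hd
    simpa [h0, h1, h2] using hW (t + d)
  have hunion : B ∪ Y ∪ W = univ :=
    eq_univ_iff_forall.2 fun j => by simpa [or_assoc] using hcover j
  have hinter : 1 ≤ #((B ∪ Y) ∩ W) := card_pos.2 ⟨_, mem_inter.2 ⟨hdBY, hdW⟩⟩
  calc 7 = #(B ∪ Y ∪ W) + 1 := by rw [hunion]; rfl
    _ ≤ #(B ∪ Y ∪ W) + #((B ∪ Y) ∩ W) := by omega
    _ = #(B ∪ Y) + #W := card_union_add_card_inter _ _
    _ ≤ #B + #Y + #W := by grw [card_union_le]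

theorem ten_le_card_of_cycleDominates {A X B Y C Z : Finset (ZMod 6)}
    (hA : CycleDominates A X) (hB : CycleDominates B Y) (hC : CycleDominates C Z)
    (hcover : ∀ j, j ∈ B ∨ j ∈ Y ∨ j ∈ X ∪ Z) :
    10 ≤ #A + #X + #B + #Y + #C + #Z := by
  have cA := hA.le_three_mul_card_add_card
  have cB := hB.le_three_mul_card_add_card
  have cC := hC.le_three_mul_card_add_card
  have hXZ : #(X ∪ Z) + #(X ∩ Z) = #X + #Z := card_union_add_card_inter X Z
  have hmid : 6 ≤ #B + #Y + #(X ∪ Z) := by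
    have hunion : B ∪ Y ∪ (X ∪ Z) = univ :=
      eq_univ_iff_forall.2 fun j => by simpa [or_assoc] using hcover j
    calc 6 = #(B ∪ Y ∪ (X ∪ Z)) := by rw [hunion]; rfl
      _ ≤ #B + #Y + #(X ∪ Z) := by grw [card_union_le, card_union_le]
  have hmidA : #A = 1 → 7 ≤ #B + #Y + #(X ∪ Z) := fun h => by
    obtain ⟨t, rfl⟩ := card_eq_one.1 h
    exact seven_le_card_of_cycleDominates_singleton hB (hA.mono subset_union_left) hcover
  have hmidC : #C = 1 → 7 ≤ #B + #Y + #(X ∪ Z) := fun h => by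
    obtain ⟨t, rfl⟩ := card_eq_one.1 h
    exact seven_le_card_of_cycleDominates_singleton hB (hC.mono subset_union_right) hcover
  omega

/-- `j ↦ j k`, well defined because `6 k = 0` in `ZMod (6 k)`. -/
def stride (k : ℕ) : ZMod 6 →+ ZMod (6 * k) :=
  ZMod.lift 6 ⟨zmultiplesHom _ (k : ZMod (6 * k)), by
    rw [zmultiplesHom_apply, natCast_zsmul, nsmul_eq_mul]
    exact_mod_cast ZMod.natCast_self (6 * k)⟩

theorem stride_natCast (k j : ℕ) : stride k j = ((j * k : ℕ) : ZMod (6 * k)) := by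
  rw [← Int.cast_natCast j, stride, ZMod.lift_coe]
  simp

theorem stride_one (k : ℕ) : stride k 1 = k := by
  simpa using stride_natCast k 1

theorem stride_injective {k : ℕ} (hk : 0 < k) : Function.Injective (stride k) := by
  refine (injective_iff_map_eq_zero _).2 fun j hj => ?_
  rw [← ZMod.natCast_zmod_val j, stride_natCast, ZMod.natCast_eq_zero_iff,
    Nat.mul_dvd_mul_iff_right hk] at hj
  rw [← ZMod.val_eq_zero]
  exact Nat.eq_zero_of_dvd_of_lt hj (ZMod.val_lt j)

theorem IsDominating.petersen_inr {n k : ℕ} {S : Set (ZMod n ⊕ ZMod n)}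
    (hS : IsDominating (petersen n k) S) (t : ZMod n) :
    Sum.inr t ∈ S ∨ Sum.inr (t + k) ∈ S ∨ Sum.inr (t - k) ∈ S ∨ Sum.inl t ∈ S := by
  rcases hS (Sum.inr t) with h | ⟨u | u, hu, hadj⟩
  · exact Or.inl h
  · simp only [petersen, fromRel_adj, ne_eq, reduceCtorEq, not_false_eq_true, or_false,
      true_and] at hadj
    subst hadj
    tauto
  · simp only [petersen, fromRel_adj, ne_eq, Sum.inr.injEq] at hadj
    rcases hadj.2 with rfl | rfl
    · simp [hu]
    · tauto

theorem IsDominating.petersen_inl {n k : ℕ} {S : Set (ZMod n ⊕ ZMod n)}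
    (hS : IsDominating (petersen n k) S) (t : ZMod n) :
    Sum.inl t ∈ S ∨ Sum.inl (t + 1) ∈ S ∨ Sum.inl (t - 1) ∈ S ∨ Sum.inr t ∈ S := by
  rcases hS (Sum.inl t) with h | ⟨u | u, hu, hadj⟩
  · exact Or.inl h
  · simp only [petersen, fromRel_adj, ne_eq, Sum.inl.injEq] at hadj
    rcases hadj.2 with rfl | rfl
    · simp [hu]
    · tauto
  · simp only [petersen, fromRel_adj, ne_eq, reduceCtorEq, not_false_eq_true, false_or,
      true_and] at hadj
    subst hadj
    tauto

section Columns

variable {k : ℕ} (S : Finset (ZMod (6 * k) ⊕ ZMod (6 * k)))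

def outerColumn (b : ZMod (6 * k)) : Finset (ZMod 6) :=
  univ.filter fun j => Sum.inl (b + stride k j) ∈ S

def innerColumn (b : ZMod (6 * k)) : Finset (ZMod 6) :=
  univ.filter fun j => Sum.inr (b + stride k j) ∈ S

theorem card_outerColumn_add_stride (b : ZMod (6 * k)) (m : ZMod 6) :
    #(outerColumn S (b + stride k m)) = #(outerColumn S b) :=
  card_equiv (Equiv.addRight m) fun j => by simp [outerColumn, add_assoc, add_comm (stride k m)]

theorem card_innerColumn_add_stride (b : ZMod (6 * k)) (m : ZMod 6) :
    #(innerColumn S (b + stride k m)) = #(innerColumn S b) :=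
  card_equiv (Equiv.addRight m) fun j => by simp [innerColumn, add_assoc, add_comm (stride k m)]

theorem exists_stride_iff (c : ℕ) (P : ZMod (6 * k) → Prop) :
    (∃ j ≤ 5, P ((c + j * k : ℕ) : ZMod (6 * k))) ↔ ∃ a : ZMod 6, P (c + stride k a) := by
  constructor
  · rintro ⟨j, -, hj⟩
    exact ⟨j, by rwa [stride_natCast, ← Nat.cast_add]⟩
  · rintro ⟨a, ha⟩
    refine ⟨a.val, Nat.le_of_lt_succ a.val_lt, ?_⟩
    rwa [Nat.cast_add, ← stride_natCast, ZMod.natCast_zmod_val]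

theorem ncard_slice6 (hk : 0 < k) (c : ℕ) :
    (slice6 k S c).ncard = #(outerColumn S c) + #(innerColumn S c) := by
  let e : ZMod 6 ↪ ZMod (6 * k) :=
    ⟨(c + stride k ·), (add_right_injective _).comp (stride_injective hk)⟩
  have : slice6 k S c = ↑(((outerColumn S c).map e).disjSum ((innerColumn S c).map e)) := by
    ext x
    rw [slice6, Set.mem_ofPred_eq, exists_stride_iff c (fun y => x = Sum.inl y ∨ x = Sum.inr y)]
    rcases x with x | x <;> simp only [Sum.inl.injEq, Sum.inr.injEq,
        reduceCtorEq, or_false, false_or, outerColumn, innerColumn, SetLike.mem_coe, mem_disjSum,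
        mem_map, mem_filter, mem_univ, true_and, Function.Embedding.coeFn_mk, eq_comm,
        exists_eq_right', and_false, exists_const, e] <;>
      exact ⟨fun ⟨h, a, hx⟩ => ⟨a, hx ▸ h, hx⟩,
        fun ⟨a, h, hx⟩ => ⟨hx ▸ h, a, hx⟩⟩
  rw [this, Set.ncard_coe_finset, card_disjSum, card_map, card_map]

theorem ncard_slice6_mod (hk : 0 < k) (c : ℕ) :
    (slice6 k S (c % k)).ncard = #(outerColumn S c) + #(innerColumn S c) := by
  rw [ncard_slice6 S hk, ← card_outerColumn_add_stride S _ (c / k : ℕ),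
    ← card_innerColumn_add_stride S _ (c / k : ℕ), stride_natCast, ← Nat.cast_add,
    Nat.mod_add_div']

variable {S} in
theorem IsDominating.cycleDominates_column
    (hS : IsDominating (petersen (6 * k) k) ↑S) (b : ZMod (6 * k)) :
    CycleDominates (innerColumn S b) (outerColumn S b) := fun j => by
  simpa only [innerColumn, outerColumn, mem_filter, mem_univ, true_and, map_add, map_sub,
    stride_one, add_assoc, add_sub_assoc, mem_coe] using hS.petersen_inr (b + stride k j)

variable {S} in
theorem IsDominating.outerColumn_cover
    (hS : IsDominating (petersen (6 * k) k) ↑S) (b : ZMod (6 * k)) (j : ZMod 6) :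
    j ∈ innerColumn S b ∨ j ∈ outerColumn S b ∨
      j ∈ outerColumn S (b - 1) ∪ outerColumn S (b + 1) := by
  have := hS.petersen_inl (b + stride k j)
  simp only [innerColumn, outerColumn, mem_union, mem_filter, mem_univ, true_and, mem_coe,
    add_right_comm b, sub_add_eq_add_sub] at this ⊢
  tauto

end Columns

theorem slice6_triple_general (k : ℕ)
    (S : Finset (ZMod (6 * k) ⊕ ZMod (6 * k))) (hS : IsDominating (petersen (6 * k) k) ↑S)
    (i : ℕ) (hi : i < k) :
    10 ≤ (slice6 k S ((i + k - 1) % k)).ncard + (slice6 k S i).ncard +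
         (slice6 k S ((i + 1) % k)).ncard := by
  have hk : 0 < k := Nat.zero_lt_of_lt hi
  have hL : ((i + k - 1 : ℕ) : ZMod (6 * k)) = (i - 1 : ZMod (6 * k)) + stride k 1 := by
    rw [stride_one, Nat.cast_sub (by omega)]
    push_cast
    ring
  have hleft := ncard_slice6_mod S hk (i + k - 1)
  rw [hL, card_outerColumn_add_stride, card_innerColumn_add_stride] at hleft
  have hmid := ncard_slice6_mod S hk i
  rw [Nat.mod_eq_of_lt hi] at hmid
  have hright := ncard_slice6_mod S hk (i + 1)
  rw [Nat.cast_succ] at hright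
  have := ten_le_card_of_cycleDominates (hS.cycleDominates_column (i - 1))
    (hS.cycleDominates_column i) (hS.cycleDominates_column (i + 1)) (hS.outerColumn_cover i)
  omega

theorem slice6_triple (k : ℕ) (hk : 4 ≤ k)
    (S : Finset (ZMod (6 * k) ⊕ ZMod (6 * k))) (hS : IsDominating (petersen (6 * k) k) ↑S)
    (i : ℕ) (hi : i < k) :
    10 ≤ (slice6 k S ((i + k - 1) % k)).ncard + (slice6 k S i).ncard +
         (slice6 k S ((i + 1) % k)).ncard :=
  slice6_triple_general k S hS i hi
end

section
/- For every k ≥ 4 with k ≡ 0 (mod 3), the set S = {u_i : 0 ≤ i ≤ k−1} ∪ {u_i : 3k ≤ i ≤ 4k−1} ∪ {v_{k+3i+1} : 0 ≤ i ≤ 2k/3−1} ∪ {v_{4k+3i+1} : 0 ≤ i ≤ 2k/3−1} is a dominating set of P(6k,k) of cardinality 10k/3. -/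
open SimpleGraph

/-!
The inner vertices split into the `k` six-cycles `u_r, u_{r+k}, …, u_{r+5k}` (`r < k`), and the
chosen vertices `u_r`, `u_{r+3k}` are antipodal on each of them, so together they dominate it. Their
spokes dominate the outer vertices `v_j` with `j ∈ [0, k) ∪ [3k, 4k)`; the other outer vertices form
the two paths `v_k … v_{3k-1}` and `v_{4k} … v_{6k-1}`, which, as `3 ∣ k`, are dominated by their
vertices `v_{3q+1}`. All chosen indices are distinct residues mod `6k`, which gives the count
`k + k + 2k/3 + 2k/3`.
-/

open Finset Function

section Domination

variable {V : Type*} {G : SimpleGraph V} {S : Set V}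

def Dominated (G : SimpleGraph V) (S : Set V) (v : V) : Prop :=
  v ∈ S ∨ ∃ u ∈ S, G.Adj u v

lemma Dominated.of_mem {v : V} (hv : v ∈ S) : Dominated G S v := Or.inl hv

lemma Dominated.of_adj {u v : V} (hu : u ∈ S) (h : G.Adj u v) : Dominated G S v :=
  Or.inr ⟨u, hu, h⟩

end Domination

section Petersen

variable {n k : ℕ} {S : Set (ZMod n ⊕ ZMod n)}

lemma petersen_adj_inl_inl_s19 {a b : ZMod n} :
    (petersen n k).Adj (Sum.inl a) (Sum.inl b) ↔ a ≠ b ∧ (b = a + 1 ∨ a = b + 1) := by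
  simp [petersen]

lemma petersen_adj_inr_inr_s19 {a b : ZMod n} :
    (petersen n k).Adj (Sum.inr a) (Sum.inr b) ↔ a ≠ b ∧ (b = a + k ∨ a = b + k) := by
  simp [petersen]

lemma petersen_adj_inr_inl_s19 (a : ZMod n) : (petersen n k).Adj (Sum.inr a) (Sum.inl a) := by
  simp [petersen]

lemma dominated_inl_of_inr_mem {x : ZMod n} (hx : Sum.inr x ∈ S) :
    Dominated (petersen n k) S (Sum.inl x) :=
  .of_adj hx (petersen_adj_inr_inl_s19 x)

lemma dominated_inl_of_near {x y : ZMod n} (hy : Sum.inl y ∈ S)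
    (hxy : x = y - 1 ∨ x = y ∨ x = y + 1) : Dominated (petersen n k) S (Sum.inl x) := by
  by_cases h : x = y
  · exact .of_mem (h ▸ hy)
  refine .of_adj hy (petersen_adj_inl_inl_s19.2 ⟨Ne.symm h, ?_⟩)
  rcases hxy with rfl | rfl | rfl
  · exact Or.inr (sub_add_cancel y 1).symm
  · exact absurd rfl h
  · exact Or.inl rfl

lemma dominated_inr_of_near {x y : ZMod n} (hy : Sum.inr y ∈ S)
    (hxy : x = y - k ∨ x = y ∨ x = y + k) : Dominated (petersen n k) S (Sum.inr x) := by
  by_cases h : x = y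
  · exact .of_mem (h ▸ hy)
  refine .of_adj hy (petersen_adj_inr_inr_s19.2 ⟨Ne.symm h, ?_⟩)
  rcases hxy with rfl | rfl | rfl
  · exact Or.inr (sub_add_cancel y _).symm
  · exact absurd rfl h
  · exact Or.inl rfl

end Petersen

lemma ZMod.natCast_injOn_Iio (n : ℕ) : Set.InjOn (Nat.cast : ℕ → ZMod n) (Set.Iio n) :=
  fun a ha b hb h => by
    simpa [ZMod.val_cast_of_lt ha, ZMod.val_cast_of_lt hb] using congrArg ZMod.val h

lemma card_image_range_natCast {β : Type*} [DecidableEq β] {n m : ℕ} {e : ZMod n → β}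
    (he : Injective e) {g : ℕ → ℕ} (hg : Injective g) (hlt : ∀ i < m, g i < n) :
    ((range m).image fun i => e (g i : ZMod n)).card = m := by
  rw [card_image_of_injOn, card_range]
  intro a ha b hb h
  simp only [coe_range, Set.mem_Iio] at ha hb
  exact hg (ZMod.natCast_injOn_Iio n (hlt a ha) (hlt b hb) (he h))

def domSet (k : ℕ) : Finset (ZMod (6 * k) ⊕ ZMod (6 * k)) :=
  ((Finset.range k).image fun i =>
      (Sum.inr ((i : ℕ) : ZMod (6 * k)) : ZMod (6 * k) ⊕ ZMod (6 * k))) ∪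
    ((Finset.range k).image fun i =>
      (Sum.inr ((3 * k + i : ℕ) : ZMod (6 * k)) : ZMod (6 * k) ⊕ ZMod (6 * k))) ∪
    ((Finset.range (2 * k / 3)).image fun i =>
      (Sum.inl ((k + 3 * i + 1 : ℕ) : ZMod (6 * k)) : ZMod (6 * k) ⊕ ZMod (6 * k))) ∪
    ((Finset.range (2 * k / 3)).image fun i =>
      (Sum.inl ((4 * k + 3 * i + 1 : ℕ) : ZMod (6 * k)) : ZMod (6 * k) ⊕ ZMod (6 * k)))

section DomSet

variable {k : ℕ}

lemma inr_natCast_mem_domSet {r : ℕ} (hr : r < k) : Sum.inr (r : ZMod (6 * k)) ∈ domSet k := by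
  simp only [domSet, mem_union, mem_image, mem_range]
  exact Or.inl (Or.inl (Or.inl ⟨r, hr, rfl⟩))

lemma inr_natCast_add_mem_domSet {r : ℕ} (hr : r < k) :
    Sum.inr ((r : ZMod (6 * k)) + 3 * k) ∈ domSet k := by
  simp only [domSet, mem_union, mem_image, mem_range]
  exact Or.inl (Or.inl (Or.inr ⟨r, hr, by push_cast; rw [add_comm]⟩))

lemma inl_natCast_mem_domSet (hk3 : k % 3 = 0) {q : ℕ}
    (hq : k ≤ 3 * q ∧ 3 * q < 3 * k ∨ 4 * k ≤ 3 * q ∧ 3 * q < 6 * k) :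
    Sum.inl ((3 * q + 1 : ℕ) : ZMod (6 * k)) ∈ domSet k := by
  simp only [domSet, mem_union, mem_image, mem_range]
  rcases hq with hq | hq
  · exact Or.inl (Or.inr ⟨q - k / 3, by omega, by congr 2; omega⟩)
  · exact Or.inr ⟨q - 4 * k / 3, by omega, by congr 2; omega⟩

lemma dominated_inl_domSet (hk : 0 < k) (hk3 : k % 3 = 0) (x : ZMod (6 * k)) :
    Dominated (petersen (6 * k) k) (domSet k) (Sum.inl x) := by
  have : NeZero (6 * k) := ⟨by omega⟩
  obtain ⟨j, hj, rfl⟩ : ∃ j < 6 * k, (j : ZMod (6 * k)) = x :=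
    ⟨x.val, x.val_lt, x.natCast_zmod_val⟩
  by_cases hspoke : j < k ∨ 3 * k ≤ j ∧ j < 4 * k
  · apply dominated_inl_of_inr_mem
    rcases hspoke with h | h
    · exact inr_natCast_mem_domSet h
    · obtain ⟨r, rfl⟩ : ∃ r, j = r + 3 * k := ⟨j - 3 * k, by omega⟩
      push_cast
      exact inr_natCast_add_mem_domSet (by omega)
  obtain ⟨q, s, hs, rfl⟩ : ∃ q s, s < 3 ∧ j = 3 * q + s := ⟨j / 3, j % 3, by omega, by omega⟩
  refine dominated_inl_of_near (inl_natCast_mem_domSet hk3 (q := q) (by omega)) ?_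
  push_cast
  interval_cases s
  · exact Or.inl (by ring)
  · exact Or.inr (Or.inl (by ring))
  · exact Or.inr (Or.inr (by ring))

lemma dominated_inr_domSet (hk : 0 < k) (x : ZMod (6 * k)) :
    Dominated (petersen (6 * k) k) (domSet k) (Sum.inr x) := by
  have : NeZero (6 * k) := ⟨by omega⟩
  obtain ⟨j, hj, rfl⟩ : ∃ j < 6 * k, (j : ZMod (6 * k)) = x :=
    ⟨x.val, x.val_lt, x.natCast_zmod_val⟩
  obtain ⟨r, t, hr, rfl⟩ : ∃ r t, r < k ∧ j = r + t * k :=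
    ⟨j % k, j / k, Nat.mod_lt _ hk, (Nat.mod_add_div' j k).symm⟩
  have ht : t < 6 := by nlinarith
  have h6k : (6 * k : ZMod (6 * k)) = 0 := by exact_mod_cast ZMod.natCast_self (6 * k)
  have hA := inr_natCast_mem_domSet (k := k) hr
  have hB := inr_natCast_add_mem_domSet (k := k) hr
  push_cast
  interval_cases t
  · exact dominated_inr_of_near hA (Or.inr (Or.inl (by ring)))
  · exact dominated_inr_of_near hA (Or.inr (Or.inr (by ring)))
  · exact dominated_inr_of_near hB (Or.inl (by ring))
  · exact dominated_inr_of_near hB (Or.inr (Or.inl (by ring)))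
  · exact dominated_inr_of_near hB (Or.inr (Or.inr (by ring)))
  · exact dominated_inr_of_near hA (Or.inl (by linear_combination h6k))

theorem isDominating_domSet (hk : 0 < k) (hk3 : k % 3 = 0) :
    IsDominating (petersen (6 * k) k) (domSet k)
  | .inl x => dominated_inl_domSet hk hk3 x
  | .inr x => dominated_inr_domSet hk x

theorem card_domSet (hk3 : k % 3 = 0) : (domSet k).card = 10 * k / 3 := by
  have hinj := ZMod.natCast_injOn_Iio (6 * k)
  rw [domSet, card_union_of_disjoint, card_union_of_disjoint, card_union_of_disjoint,
    card_image_range_natCast Sum.inr_injective (g := fun i => i) injective_id (by omega),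
    card_image_range_natCast Sum.inr_injective (g := fun i => 3 * k + i)
      (add_right_injective _) (by omega),
    card_image_range_natCast Sum.inl_injective (g := fun i => k + 3 * i + 1)
      (fun a b h => by simp at h; omega) (by omega),
    card_image_range_natCast Sum.inl_injective (g := fun i => 4 * k + 3 * i + 1)
      (fun a b h => by simp at h; omega) (by omega)]
  · omega
  all_goals simp only [Finset.disjoint_left, mem_union, mem_image, mem_range]
  · rintro _ ⟨i, hi, rfl⟩ ⟨j, hj, h⟩
    have := hinj (Set.mem_Iio.2 (by omega)) (Set.mem_Iio.2 (by omega)) (Sum.inr.inj h)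
    omega
  · rintro _ (⟨i, -, rfl⟩ | ⟨i, -, rfl⟩) ⟨j, -, ⟨⟩⟩
  · rintro _ ((⟨i, -, rfl⟩ | ⟨i, -, rfl⟩) | ⟨i, hi, rfl⟩) ⟨j, hj, h⟩
    · cases h
    · cases h
    · have := hinj (Set.mem_Iio.2 (by omega)) (Set.mem_Iio.2 (by omega)) (Sum.inl.inj h)
      omega

end DomSet

theorem P6k_dominating_set_k0mod3 (k : ℕ) (hk : 4 ≤ k) (hk3 : k % 3 = 0) :
    IsDominating (petersen (6 * k) k)
      ↑((((Finset.range k).image fun i =>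
            (Sum.inr ((i : ℕ) : ZMod (6 * k)) : ZMod (6 * k) ⊕ ZMod (6 * k))) ∪
        ((Finset.range k).image fun i =>
            (Sum.inr ((3 * k + i : ℕ) : ZMod (6 * k)) : ZMod (6 * k) ⊕ ZMod (6 * k))) ∪
        ((Finset.range (2 * k / 3)).image fun i =>
            (Sum.inl ((k + 3 * i + 1 : ℕ) : ZMod (6 * k)) : ZMod (6 * k) ⊕ ZMod (6 * k))) ∪
        ((Finset.range (2 * k / 3)).image fun i =>
            (Sum.inl ((4 * k + 3 * i + 1 : ℕ) : ZMod (6 * k)) : ZMod (6 * k) ⊕ ZMod (6 * k))))) ∧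
    ((((Finset.range k).image fun i =>
            (Sum.inr ((i : ℕ) : ZMod (6 * k)) : ZMod (6 * k) ⊕ ZMod (6 * k))) ∪
        ((Finset.range k).image fun i =>
            (Sum.inr ((3 * k + i : ℕ) : ZMod (6 * k)) : ZMod (6 * k) ⊕ ZMod (6 * k))) ∪
        ((Finset.range (2 * k / 3)).image fun i =>
            (Sum.inl ((k + 3 * i + 1 : ℕ) : ZMod (6 * k)) : ZMod (6 * k) ⊕ ZMod (6 * k))) ∪
        ((Finset.range (2 * k / 3)).image fun i =>
            (Sum.inl ((4 * k + 3 * i + 1 : ℕ) : ZMod (6 * k)) : ZMod (6 * k) ⊕ ZMod (6 * k))))).card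
      = 10 * k / 3 :=
  ⟨isDominating_domSet (by omega) hk3, card_domSet hk3⟩
end
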